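/- Nondegeneracy criterion: let ρ be a separable invertible density matrix on H1⊗H2 such that Tr_1(ρ) has nondegenerate (all distinct) eigenvalues, with eigenbasis {ϕ_j} of H2. If the correlation function factorizes (Tr(ρE(F⊗1)(1⊗G)) = Σ_iλ_i Tr(ρ_i^I F)Tr(ρ_i^{II}G) for some separable decomposition and all F, G), then ρ_{lkji} = 0 whenever j ≠ i in any product basis {φ_l⊗ϕ_j}, and consequently ρ admits a separable decomposition ρ = Σ_j μ_j σ_j^I ⊗ |ϕ_j⟩⟨ϕ_j| whose second-factor family is abelian. -/

import Mathlib

open Matrix Kronecker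
open scoped ComplexOrder


/-- Partial trace over the first tensor factor. -/
noncomputable def ptrace1 {n m : ℕ} (M : Matrix (Fin n × Fin m) (Fin n × Fin m) ℂ) :
    Matrix (Fin m) (Fin m) ℂ :=
  fun j i => ∑ k : Fin n, M (k, j) (k, i)

/-- Tensor product of vectors. -/
noncomputable def vecTens {n m : ℕ} (x : Fin n → ℂ) (y : Fin m → ℂ) : Fin n × Fin m → ℂ :=
  fun p => x p.1 * y p.2

/-- Rank-one operator `|y⟩⟨z|`. -/
noncomputable def ketbra {d : Type*} (y z : d → ℂ) : Matrix d d ℂ :=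
  fun a b => y a * star (z b)

/-- `γ = ρ^{1/2} (1 ⊗ (Tr₁ρ))^{-1/2}`, given `s = ρ^{1/2}` and `w = (Tr₁ρ)^{-1/2}`. -/
noncomputable def gammaOp {n m : ℕ} (s : Matrix (Fin n × Fin m) (Fin n × Fin m) ℂ)
    (w : Matrix (Fin m) (Fin m) ℂ) : Matrix (Fin n × Fin m) (Fin n × Fin m) ℂ :=
  s * ((1 : Matrix (Fin n) (Fin n) ℂ) ⊗ₖ w)

/-- The generalized conditional expectation `E(A) = 1 ⊗ Tr₁(γ* A γ)`. -/
noncomputable def Emap {n m : ℕ} (s : Matrix (Fin n × Fin m) (Fin n × Fin m) ℂ)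
    (w : Matrix (Fin m) (Fin m) ℂ) (A : Matrix (Fin n × Fin m) (Fin n × Fin m) ℂ) :
    Matrix (Fin n × Fin m) (Fin n × Fin m) ℂ :=
  (1 : Matrix (Fin n) (Fin n) ℂ) ⊗ₖ ptrace1 ((gammaOp s w)ᴴ * A * gammaOp s w)

/-- Matrix element `⟨φ_p⊗ϕ_r | M | φ_q⊗ϕ_s⟩` in a product basis. -/
noncomputable def mel {n m : ℕ} (φ : Fin n → Fin n → ℂ) (ϕ : Fin m → Fin m → ℂ)
    (M : Matrix (Fin n × Fin m) (Fin n × Fin m) ℂ) (p q : Fin n) (r s : Fin m) : ℂ :=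
  star (vecTens (φ p) (ϕ r)) ⬝ᵥ M.mulVec (vecTens (φ q) (ϕ s))

/-!
Write `A = Tr₁ρ` and `X(F) = Tr₁(γ*(F ⊗ 1)γ)`, so that `E(F ⊗ 1) = 1 ⊗ X(F)` and `X(F)* = X(F*)`.
Given the separable decomposition, factorization says `Tr(ρ E(F ⊗ 1)(1 ⊗ G)) = Tr(ρ(F ⊗ G))` for
all `G`, i.e. `A X(F) = Tr₁(ρ(F ⊗ 1))`. Taking adjoints, using `ρ* = ρ` and that `Tr₁` is cyclic
for operators `F ⊗ 1`, also `X(F) A = Tr₁(ρ(F ⊗ 1))`. Hence `A` commutes with every block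
`Tr₁(ρ(|φ_k⟩⟨φ_l| ⊗ 1))` of `ρ`, and since the eigenvalues `ã_j` of `A` are distinct these blocks
are diagonal in the eigenbasis `ϕ`: `(ã_j - ã_i) ρ_{lkji} = 0`. Expanding the blocks in `ϕ` gives
`ρ = Σ_j ⟨ϕ_j|ρ|ϕ_j⟩ ⊗ |ϕ_j⟩⟨ϕ_j|`, where `⟨ϕ_j|ρ|ϕ_j⟩ ≥ 0` has trace `ã_j`.
-/

section PartialTrace

variable {n m : ℕ}

-- `block M a b j i = M (a, j) (b, i)`
abbrev block (M : Matrix (Fin n × Fin m) (Fin n × Fin m) ℂ) (a b : Fin n) :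
    Matrix (Fin m) (Fin m) ℂ :=
  (comp (Fin n) (Fin n) (Fin m) (Fin m) ℂ).symm M a b

theorem ptrace1_conjTranspose (M : Matrix (Fin n × Fin m) (Fin n × Fin m) ℂ) :
    ptrace1 Mᴴ = (ptrace1 M)ᴴ := by
  ext j i
  simp [ptrace1, star_sum]

theorem Matrix.IsHermitian.ptrace1 {M : Matrix (Fin n × Fin m) (Fin n × Fin m) ℂ}
    (hM : M.IsHermitian) : (ptrace1 M).IsHermitian := by
  rw [IsHermitian, ← ptrace1_conjTranspose, hM.eq]

theorem trace_ptrace1 (M : Matrix (Fin n × Fin m) (Fin n × Fin m) ℂ) :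
    (ptrace1 M).trace = M.trace := by
  simp only [trace, diag, ptrace1, Fintype.sum_prod_type]
  exact Finset.sum_comm

theorem ptrace1_mul_one_kronecker (M : Matrix (Fin n × Fin m) (Fin n × Fin m) ℂ)
    (T : Matrix (Fin m) (Fin m) ℂ) :
    ptrace1 (M * ((1 : Matrix (Fin n) (Fin n) ℂ) ⊗ₖ T)) = ptrace1 M * T := by
  ext j i
  simp only [ptrace1, mul_apply, kroneckerMap_apply, one_apply, ite_mul, one_mul, zero_mul,
    mul_ite, mul_zero, Fintype.sum_prod_type, Finset.sum_ite_irrel, Finset.sum_const_zero,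
    Finset.sum_ite_eq', Finset.mem_univ, ↓reduceIte, Finset.sum_mul]
  exact Finset.sum_comm

theorem trace_mul_one_kronecker (M : Matrix (Fin n × Fin m) (Fin n × Fin m) ℂ)
    (T : Matrix (Fin m) (Fin m) ℂ) :
    (M * ((1 : Matrix (Fin n) (Fin n) ℂ) ⊗ₖ T)).trace = (ptrace1 M * T).trace := by
  rw [← trace_ptrace1, ptrace1_mul_one_kronecker]

theorem ptrace1_kronecker_one_mul (F : Matrix (Fin n) (Fin n) ℂ)
    (M : Matrix (Fin n × Fin m) (Fin n × Fin m) ℂ) :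
    ptrace1 ((F ⊗ₖ (1 : Matrix (Fin m) (Fin m) ℂ)) * M) =
      ptrace1 (M * (F ⊗ₖ (1 : Matrix (Fin m) (Fin m) ℂ))) := by
  ext j i
  simp only [ptrace1, mul_apply, kroneckerMap_apply, one_apply, mul_ite, mul_one, mul_zero, ite_mul,
    zero_mul, Fintype.sum_prod_type, Finset.sum_ite_eq, Finset.mem_univ, ↓reduceIte, mul_comm,
    Finset.sum_ite_eq']
  exact Finset.sum_comm

theorem ptrace1_mul_single_kronecker_one (M : Matrix (Fin n × Fin m) (Fin n × Fin m) ℂ)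
    (a b : Fin n) :
    ptrace1 (M * (single b a (1 : ℂ) ⊗ₖ (1 : Matrix (Fin m) (Fin m) ℂ))) = block M a b := by
  ext j i
  simp [ptrace1, mul_apply, Fintype.sum_prod_type, one_apply, single_apply, ite_and]

theorem mel_eq_sum_block (φ : Fin n → Fin n → ℂ) (ϕ : Fin m → Fin m → ℂ)
    (ρ : Matrix (Fin n × Fin m) (Fin n × Fin m) ℂ) (l k : Fin n) (j i : Fin m) :
    mel φ ϕ ρ l k j i =
      ∑ a, ∑ b, star (φ l a) * φ k b * (star (ϕ j) ⬝ᵥ block ρ a b *ᵥ ϕ i) := by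
  simp only [mel, dotProduct, Pi.star_apply, vecTens, star_mul', mulVec, Fintype.sum_prod_type,
    Finset.mul_sum, comp_symm_apply]
  refine Finset.sum_congr rfl fun a _ => ?_
  rw [Finset.sum_comm]
  simp only [mul_comm, mul_left_comm, mul_assoc]

end PartialTrace

section Correlations

variable {n m N : ℕ}

def ReproducesCorrelations (ρ s : Matrix (Fin n × Fin m) (Fin n × Fin m) ℂ)
    (w : Matrix (Fin m) (Fin m) ℂ) : Prop :=
  ∀ (F : Matrix (Fin n) (Fin n) ℂ) (G : Matrix (Fin m) (Fin m) ℂ),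
    (ρ * Emap s w (F ⊗ₖ (1 : Matrix (Fin m) (Fin m) ℂ)) *
        ((1 : Matrix (Fin n) (Fin n) ℂ) ⊗ₖ G)).trace = (ρ * (F ⊗ₖ G)).trace

theorem reproducesCorrelations_of_sum_kronecker
    {ρ s : Matrix (Fin n × Fin m) (Fin n × Fin m) ℂ} {w : Matrix (Fin m) (Fin m) ℂ}
    {c : Fin N → ℂ} {A : Fin N → Matrix (Fin n) (Fin n) ℂ} {B : Fin N → Matrix (Fin m) (Fin m) ℂ}
    (hdec : ρ = ∑ i, c i • (A i ⊗ₖ B i))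
    (hfact : ∀ (F : Matrix (Fin n) (Fin n) ℂ) (G : Matrix (Fin m) (Fin m) ℂ),
      (ρ * Emap s w (F ⊗ₖ (1 : Matrix (Fin m) (Fin m) ℂ)) *
          ((1 : Matrix (Fin n) (Fin n) ℂ) ⊗ₖ G)).trace =
        ∑ i, c i * (A i * F).trace * (B i * G).trace) :
    ReproducesCorrelations ρ s w := by
  intro F G
  rw [hfact, hdec, Finset.sum_mul, trace_sum]
  refine Finset.sum_congr rfl fun i _ => ?_
  rw [smul_mul_assoc, trace_smul, ← mul_kronecker_mul, trace_kronecker, smul_eq_mul, mul_assoc]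

variable {ρ s : Matrix (Fin n × Fin m) (Fin n × Fin m) ℂ} {w : Matrix (Fin m) (Fin m) ℂ}

theorem ReproducesCorrelations.ptrace1_mul_eq (h : ReproducesCorrelations ρ s w)
    (F : Matrix (Fin n) (Fin n) ℂ) :
    ptrace1 ρ * ptrace1 ((gammaOp s w)ᴴ * (F ⊗ₖ 1) * gammaOp s w) =
      ptrace1 (ρ * (F ⊗ₖ (1 : Matrix (Fin m) (Fin m) ℂ))) := by
  refine ext_iff_trace_mul_right.mpr fun G => ?_
  have hFG : F ⊗ₖ G = (F ⊗ₖ 1) * ((1 : Matrix (Fin n) (Fin n) ℂ) ⊗ₖ G) := by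
    rw [← mul_kronecker_mul, Matrix.mul_one, Matrix.one_mul]
  have hG := h F G
  rw [Emap, Matrix.mul_assoc, ← mul_kronecker_mul, Matrix.one_mul, trace_mul_one_kronecker, hFG,
    ← Matrix.mul_assoc ρ, trace_mul_one_kronecker] at hG
  rw [Matrix.mul_assoc, hG]

theorem ReproducesCorrelations.commute_ptrace1 (hρ : ρ.IsHermitian)
    (h : ReproducesCorrelations ρ s w) (F : Matrix (Fin n) (Fin n) ℂ) :
    Commute (ptrace1 ρ) (ptrace1 (ρ * (F ⊗ₖ (1 : Matrix (Fin m) (Fin m) ℂ)))) := by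
  set X := fun F' : Matrix (Fin n) (Fin n) ℂ =>
    ptrace1 ((gammaOp s w)ᴴ * (F' ⊗ₖ 1) * gammaOp s w)
  have hX : (X Fᴴ)ᴴ = X F := by
    simp only [X, ← ptrace1_conjTranspose, conjTranspose_mul, conjTranspose_kronecker,
      conjTranspose_conjTranspose, conjTranspose_one, Matrix.mul_assoc]
  have hC : (ptrace1 (ρ * (Fᴴ ⊗ₖ (1 : Matrix (Fin m) (Fin m) ℂ))))ᴴ =
      ptrace1 (ρ * (F ⊗ₖ (1 : Matrix (Fin m) (Fin m) ℂ))) := by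
    rw [← ptrace1_conjTranspose, conjTranspose_mul, conjTranspose_kronecker,
      conjTranspose_conjTranspose, conjTranspose_one, hρ.eq, ptrace1_kronecker_one_mul]
  have hAX : ptrace1 ρ * X F = ptrace1 (ρ * (F ⊗ₖ (1 : Matrix (Fin m) (Fin m) ℂ))) :=
    h.ptrace1_mul_eq F
  have hXA : X F * ptrace1 ρ = ptrace1 (ρ * (F ⊗ₖ (1 : Matrix (Fin m) (Fin m) ℂ))) := by
    rw [← hC, ← h.ptrace1_mul_eq, conjTranspose_mul, hρ.ptrace1.eq, hX]
  rw [← hAX]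
  exact (Commute.refl _).mul_right (hAX.trans hXA.symm)

theorem ReproducesCorrelations.commute_block (hρ : ρ.IsHermitian)
    (h : ReproducesCorrelations ρ s w) (a b : Fin n) : Commute (ptrace1 ρ) (block ρ a b) := by
  simpa only [ptrace1_mul_single_kronecker_one] using h.commute_ptrace1 hρ (single b a 1)

end Correlations

section Eigenvectors

variable {d : Type*} [Fintype d]

theorem star_dotProduct_mulVec_eq_zero_of_commute {A M : Matrix d d ℂ} (hA : A.IsHermitian)
    (hAM : Commute A M) {u v : d → ℂ} {a b : ℝ} (hu : A *ᵥ u = (a : ℂ) • u)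
    (hv : A *ᵥ v = (b : ℂ) • v) (hab : a ≠ b) : star u ⬝ᵥ M *ᵥ v = 0 := by
  have hstar : star u ᵥ* A = (a : ℂ) • star u := by
    rw [← hA.eq, ← star_mulVec, hu, star_smul, Complex.star_def, Complex.conj_ofReal]
  have key : (a : ℂ) * (star u ⬝ᵥ M *ᵥ v) = b * (star u ⬝ᵥ M *ᵥ v) := by
    calc (a : ℂ) * (star u ⬝ᵥ M *ᵥ v) = star u ⬝ᵥ (A * M) *ᵥ v := by
          rw [← mulVec_mulVec, dotProduct_mulVec (star u) A, hstar, smul_dotProduct, smul_eq_mul]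
      _ = star u ⬝ᵥ (M * A) *ᵥ v := by rw [hAM.eq]
      _ = b * (star u ⬝ᵥ M *ᵥ v) := by
          rw [← mulVec_mulVec, hv, mulVec_smul, dotProduct_smul, smul_eq_mul]
  have hab' : (a : ℂ) ≠ b := by exact_mod_cast hab
  have hzero : ((a : ℂ) - b) * (star u ⬝ᵥ M *ᵥ v) = 0 := by linear_combination key
  exact (mul_eq_zero.mp hzero).resolve_left (sub_ne_zero.mpr hab')

theorem eq_sum_smul_ketbra [DecidableEq d] {ϕ : d → d → ℂ}
    (hϕ : ∀ i j, (∑ k, star (ϕ i k) * ϕ j k) = if i = j then 1 else 0) (M : Matrix d d ℂ) :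
    M = ∑ j, ∑ i, (star (ϕ j) ⬝ᵥ M *ᵥ ϕ i) • ketbra (ϕ j) (ϕ i) := by
  set V : Matrix d d ℂ := of fun x j => ϕ j x
  have hV : V * Vᴴ = 1 := mul_eq_one_comm.mp <| by
    ext i j
    simpa [mul_apply, one_apply, V] using hϕ i j
  calc M = V * (Vᴴ * M * V) * Vᴴ := by
        simp only [← Matrix.mul_assoc, hV, Matrix.one_mul]
        rw [Matrix.mul_assoc, hV, Matrix.mul_one]
    _ = _ := by
        ext x y
        simp only [V, mul_apply, of_apply, conjTranspose_apply, Finset.sum_mul, Finset.mul_sum,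
          dotProduct, Pi.star_apply, mulVec, Matrix.sum_apply, Matrix.smul_apply, ketbra, smul_eq_mul]
        rw [Finset.sum_comm]
        refine Finset.sum_congr rfl fun _ _ => Finset.sum_congr rfl fun _ _ => ?_
        rw [Finset.sum_comm]
        simp only [mul_comm, mul_left_comm, mul_assoc]

theorem eq_sum_smul_ketbra_self [DecidableEq d] {ϕ : d → d → ℂ}
    (hϕ : ∀ i j, (∑ k, star (ϕ i k) * ϕ j k) = if i = j then 1 else 0) {M : Matrix d d ℂ}
    (hM : ∀ j i, j ≠ i → star (ϕ j) ⬝ᵥ M *ᵥ ϕ i = 0) :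
    M = ∑ j, (star (ϕ j) ⬝ᵥ M *ᵥ ϕ j) • ketbra (ϕ j) (ϕ j) := by
  refine (eq_sum_smul_ketbra hϕ M).trans (Finset.sum_congr rfl fun j _ => ?_)
  refine Finset.sum_eq_single j (fun i _ hij => ?_) (by simp)
  rw [hM j i (Ne.symm hij), zero_smul]

end Eigenvectors

section Compression

variable {n m : ℕ}

def compress (ρ : Matrix (Fin n × Fin m) (Fin n × Fin m) ℂ) (v : Fin m → ℂ) :
    Matrix (Fin n) (Fin n) ℂ :=
  of fun a b => star v ⬝ᵥ block ρ a b *ᵥ v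

theorem trace_compress (ρ : Matrix (Fin n × Fin m) (Fin n × Fin m) ℂ) (v : Fin m → ℂ) :
    (compress ρ v).trace = star v ⬝ᵥ ptrace1 ρ *ᵥ v := by
  simp only [trace, compress, dotProduct, Pi.star_apply, mulVec, comp_symm_apply, Finset.mul_sum,
    diag_apply, of_apply, ptrace1, Finset.sum_mul]
  rw [Finset.sum_comm]
  exact Finset.sum_congr rfl fun _ _ => Finset.sum_comm

theorem Matrix.PosSemidef.compress {ρ : Matrix (Fin n × Fin m) (Fin n × Fin m) ℂ}
    (hρ : ρ.PosSemidef) (v : Fin m → ℂ) : (compress ρ v).PosSemidef := by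
  -- conjugation by the matrix of `x ↦ x ⊗ v`
  convert hρ.conjTranspose_mul_mul_same
    (of fun (p : Fin n × Fin m) (c : Fin n) => if p.1 = c then v p.2 else 0) using 1
  ext a b
  simp only [_root_.compress, dotProduct, Pi.star_apply, mulVec, comp_symm_apply, Finset.mul_sum,
    of_apply, mul_apply, conjTranspose_apply, apply_ite star, star_zero, ite_mul, zero_mul, mul_ite,
    mul_zero, Fintype.sum_prod_type, Finset.sum_ite_irrel, Finset.sum_const_zero, Finset.sum_ite_eq',
    Finset.mem_univ, ↓reduceIte, Finset.sum_mul, mul_assoc]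
  exact Finset.sum_comm

theorem eq_sum_compress_kronecker_ketbra {ϕ : Fin m → Fin m → ℂ}
    (hϕ : ∀ i j, (∑ k, star (ϕ i k) * ϕ j k) = if i = j then 1 else 0)
    {ρ : Matrix (Fin n × Fin m) (Fin n × Fin m) ℂ}
    (hρ : ∀ a b j i, j ≠ i → star (ϕ j) ⬝ᵥ block ρ a b *ᵥ ϕ i = 0) :
    ρ = ∑ j, compress ρ (ϕ j) ⊗ₖ ketbra (ϕ j) (ϕ j) := by
  ext ⟨a, x⟩ ⟨b, y⟩
  have h := congrFun₂ (eq_sum_smul_ketbra_self hϕ (hρ a b)) x y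
  simp only [Matrix.sum_apply, Matrix.smul_apply, smul_eq_mul] at h
  simp only [Matrix.sum_apply, kroneckerMap_apply, compress, of_apply]
  exact h

end Compression

theorem nondegeneracy_criterion_general {n m N : ℕ}
    (ρ s : Matrix (Fin n × Fin m) (Fin n × Fin m) ℂ) (w : Matrix (Fin m) (Fin m) ℂ)
    (lam : Fin N → ℝ)
    (ρI : Fin N → Matrix (Fin n) (Fin n) ℂ)
    (ρII : Fin N → Matrix (Fin m) (Fin m) ℂ)
    (hdec : ρ = ∑ i, ((lam i : ℝ) : ℂ) • (ρI i ⊗ₖ ρII i))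
    (hρ : ρ.PosDef) (htr : ρ.trace = 1)
    (φ : Fin n → Fin n → ℂ)
    (ϕ : Fin m → Fin m → ℂ)
    (hϕ : ∀ i j, (∑ k, star (ϕ i k) * ϕ j k) = if i = j then 1 else 0)
    (am : Fin m → ℝ) (hapos : ∀ j, 0 < am j)
    (heig : ∀ j, (ptrace1 ρ).mulVec (ϕ j) = ((am j : ℝ) : ℂ) • ϕ j)
    (hnondeg : Function.Injective am)
    (hfact : ∀ (F : Matrix (Fin n) (Fin n) ℂ) (G : Matrix (Fin m) (Fin m) ℂ),
      (ρ * Emap s w (F ⊗ₖ (1 : Matrix (Fin m) (Fin m) ℂ)) *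
          ((1 : Matrix (Fin n) (Fin n) ℂ) ⊗ₖ G)).trace =
        ∑ i, ((lam i : ℝ) : ℂ) * (ρI i * F).trace * (ρII i * G).trace) :
    (∀ (l k : Fin n) (j i : Fin m), j ≠ i → mel φ ϕ ρ l k j i = 0) ∧
      ∃ (μ : Fin m → ℝ) (σI : Fin m → Matrix (Fin n) (Fin n) ℂ),
        (∀ j, 0 ≤ μ j) ∧ (∑ j, μ j = 1) ∧
        (∀ j, (σI j).PosSemidef ∧ (σI j).trace = 1) ∧
        ρ = ∑ j, ((μ j : ℝ) : ℂ) • (σI j ⊗ₖ ketbra (ϕ j) (ϕ j)) := by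
  have hcorr : ReproducesCorrelations ρ s w := reproducesCorrelations_of_sum_kronecker hdec hfact
  have hoff : ∀ a b j i, j ≠ i → star (ϕ j) ⬝ᵥ block ρ a b *ᵥ ϕ i = 0 := fun a b j i hji =>
    star_dotProduct_mulVec_eq_zero_of_commute hρ.isHermitian.ptrace1
      (hcorr.commute_block hρ.isHermitian a b) (heig j) (heig i) (hnondeg.ne hji)
  have hnorm : ∀ j, star (ϕ j) ⬝ᵥ ϕ j = 1 := fun j => by simpa [dotProduct] using hϕ j j
  have htrace : ∀ j, (compress ρ (ϕ j)).trace = am j := fun j => by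
    rw [trace_compress, heig, dotProduct_smul, hnorm, smul_eq_mul, mul_one]
  have hketbra : ∀ j, (ketbra (ϕ j) (ϕ j)).trace = 1 := fun j => by
    simpa [trace, ketbra, dotProduct, mul_comm] using hnorm j
  have ham : ∀ j, (am j : ℂ) ≠ 0 := fun j => by exact_mod_cast (hapos j).ne'
  have hdecomp := eq_sum_compress_kronecker_ketbra hϕ hoff
  refine ⟨fun l k j i hji => ?_, am, fun j => (am j : ℂ)⁻¹ • compress ρ (ϕ j),
    fun j => (hapos j).le, ?_, fun j => ⟨?_, ?_⟩, ?_⟩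
  · simp [mel_eq_sum_block, hoff _ _ _ _ hji]
  · rw [hdecomp, trace_sum] at htr
    simp only [trace_kronecker, htrace, hketbra, mul_one] at htr
    exact_mod_cast htr
  · exact (hρ.posSemidef.compress _).smul (by simpa using (hapos j).le)
  · rw [trace_smul, htrace, smul_eq_mul, inv_mul_cancel₀ (ham j)]
  · conv_lhs => rw [hdecomp]
    refine Finset.sum_congr rfl fun j _ => ?_
    rw [smul_kronecker, smul_smul, mul_inv_cancel₀ (ham j), one_smul]

/-- nondegeneracy criterion. If `Tr₁ρ` has nondegenerate eigenvalues and
the correlation function factorizes, then `ρ_{lkji} = 0` for `j ≠ i`, and `ρ` admits a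
separable decomposition `ρ = Σ_j μ_j σ_jᴵ ⊗ |ϕ_j⟩⟨ϕ_j|` with abelian second factors. -/
theorem nondegeneracy_criterion {n m N : ℕ}
    (ρ s : Matrix (Fin n × Fin m) (Fin n × Fin m) ℂ) (w : Matrix (Fin m) (Fin m) ℂ)
    (lam : Fin N → ℝ) (hlpos : ∀ i, 0 < lam i) (hlsum : ∑ i, lam i = 1)
    (ρI : Fin N → Matrix (Fin n) (Fin n) ℂ)
    (hρI : ∀ i, (ρI i).PosSemidef ∧ (ρI i).trace = 1)
    (ρII : Fin N → Matrix (Fin m) (Fin m) ℂ)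
    (hρII : ∀ i, (ρII i).PosSemidef ∧ (ρII i).trace = 1)
    (hdec : ρ = ∑ i, ((lam i : ℝ) : ℂ) • (ρI i ⊗ₖ ρII i))
    (hρ : ρ.PosDef) (htr : ρ.trace = 1)
    (hs : s.PosSemidef) (hss : s * s = ρ)
    (hw : w.PosSemidef) (hww : w * w * ptrace1 ρ = 1)
    (φ : Fin n → Fin n → ℂ)
    (hφ : ∀ i j, (∑ k, star (φ i k) * φ j k) = if i = j then 1 else 0)
    (ϕ : Fin m → Fin m → ℂ)
    (hϕ : ∀ i j, (∑ k, star (ϕ i k) * ϕ j k) = if i = j then 1 else 0)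
    (am : Fin m → ℝ) (hapos : ∀ j, 0 < am j)
    (heig : ∀ j, (ptrace1 ρ).mulVec (ϕ j) = ((am j : ℝ) : ℂ) • ϕ j)
    (hnondeg : Function.Injective am)
    (hfact : ∀ (F : Matrix (Fin n) (Fin n) ℂ) (G : Matrix (Fin m) (Fin m) ℂ),
      (ρ * Emap s w (F ⊗ₖ (1 : Matrix (Fin m) (Fin m) ℂ)) *
          ((1 : Matrix (Fin n) (Fin n) ℂ) ⊗ₖ G)).trace =
        ∑ i, ((lam i : ℝ) : ℂ) * (ρI i * F).trace * (ρII i * G).trace) :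
    (∀ (l k : Fin n) (j i : Fin m), j ≠ i → mel φ ϕ ρ l k j i = 0) ∧
      ∃ (μ : Fin m → ℝ) (σI : Fin m → Matrix (Fin n) (Fin n) ℂ),
        (∀ j, 0 ≤ μ j) ∧ (∑ j, μ j = 1) ∧
        (∀ j, (σI j).PosSemidef ∧ (σI j).trace = 1) ∧
        ρ = ∑ j, ((μ j : ℝ) : ℂ) • (σI j ⊗ₖ ketbra (ϕ j) (ϕ j)) :=
  nondegeneracy_criterion_general ρ s w lam ρI ρII hdec hρ htr φ ϕ hϕ am hapos heig hnondeg hfact
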